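/- One-step linear contraction of the max-distance sketched Bregman projection method: let f : ℝ^n → ℝ be μ-strongly convex, x ∈ ℝ^n, x_* ∈ ∂f(x), A x̄ = b. Assume (i) a max-spectral bound: σ_∞ > 0 with max_{i=1,…,q} vᵀ Z_i v ≥ σ_∞‖v‖² for all v ∉ Null(A); (ii) an error bound: γ > 0 with γ·D_f^{x_*}(x, x̄) ≤ ‖Ax − b‖²; (iii) i* is an index maximizing g_i(x) over i = 1,…,q, and x̂ is a point with S_{i*}ᵀ A x̂ = S_{i*}ᵀ b admitting x̂_* ∈ ∂f(x̂) with D_f^{x̂_*}(x̂, y) ≤ D_f^{x_*}(x, y) − D_f^{x_*}(x, x̂) for all y with S_{i*}ᵀ A y = S_{i*}ᵀ b. Then D_f^{x̂_*}(x̂, x̄) ≤ (1 − μγσ_∞/(2‖A‖²))·D_f^{x_*}(x, x̄), where ‖A‖ is the spectral norm of A (assume A ≠ 0). -/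

import Mathlib

/-! Since `W` is a symmetric generalized inverse of `Sᵀ A Aᵀ S`, the matrix `Aᵀ S W Sᵀ A` is a
symmetric idempotent, i.e. an orthogonal projection. As `x̂` solves the sketched system, the sketched
residual `g_{i*}(x)` is the squared length of the projection of `x - x̂`, hence at most
`‖x - x̂‖² ≤ (2/μ) D(x, x̂)` by strong convexity. On the other side, the error bound, `‖A‖` and the
max-spectral bound at `x - x̄` (whose image under `A` is the residual `Ax - b`, and `i*` maximizes the
`g_i`) give `γ D(x, x̄) ≤ ‖Ax - b‖² ≤ (‖A‖² / σ_∞) g_{i*}(x)`. So `D(x, x̂)` is at least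
`μγσ_∞ / (2‖A‖²) · D(x, x̄)`, and the projection inequality at `y = x̄` gives the contraction. -/

open Matrix

/-- The spectral norm (ℓ²→ℓ² operator norm) of a real matrix. -/
noncomputable def specNorm {m n : ℕ} (A : Matrix (Fin m) (Fin n) ℝ) : ℝ :=
  ‖LinearMap.toContinuousLinearMap (Matrix.toEuclideanLin A)‖

noncomputable def fmax {ι : Type*} [Fintype ι] [Nonempty ι] (v : ι → ℝ) : ℝ :=
  Finset.univ.sup' Finset.univ_nonempty v

def IsSubgrad {n : ℕ} (f : (Fin n → ℝ) → ℝ) (x xs : Fin n → ℝ) : Prop :=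
  ∀ u : Fin n → ℝ, f u ≥ f x + xs ⬝ᵥ (u - x)

/-- `f` is μ-strongly convex (w.r.t. the Euclidean norm, ‖v‖² = v ⬝ᵥ v). -/
def StronglyConvexWith {n : ℕ} (μ : ℝ) (f : (Fin n → ℝ) → ℝ) : Prop :=
  ∀ x y xs : Fin n → ℝ, IsSubgrad f x xs →
    f y ≥ f x + xs ⬝ᵥ (y - x) + μ / 2 * ((y - x) ⬝ᵥ (y - x))

/-- Bregman distance D_f^{x_*}(x, y) := f(y) − f(x) − ⟨x_*, y − x⟩. -/
noncomputable def breg {n : ℕ} (f : (Fin n → ℝ) → ℝ) (xs x y : Fin n → ℝ) : ℝ :=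
  f y - f x - xs ⬝ᵥ (y - x)

namespace Matrix

theorem IsSymm.dotProduct_mulVec_comm {ι R : Type*} [Fintype ι] [CommSemiring R]
    {H : Matrix ι ι R} (hH : H.IsSymm) (u w : ι → R) : u ⬝ᵥ H *ᵥ w = H *ᵥ u ⬝ᵥ w := by
  rw [dotProduct_mulVec, ← mulVec_transpose, hH.eq]

theorem dotProduct_mulVec_le_dotProduct_self_of_isSymm_of_idempotent {ι : Type*} [Fintype ι]
    {P : Matrix ι ι ℝ} (hsymm : P.IsSymm) (hidem : P * P = P) (v : ι → ℝ) :
    v ⬝ᵥ P *ᵥ v ≤ v ⬝ᵥ v := by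
  have hPv : P *ᵥ v ⬝ᵥ P *ᵥ v = v ⬝ᵥ P *ᵥ v := by
    rw [← hsymm.dotProduct_mulVec_comm, mulVec_mulVec, hidem]
  have hnonneg : 0 ≤ (v - P *ᵥ v) ⬝ᵥ (v - P *ᵥ v) := by
    simpa using dotProduct_self_star_nonneg (v - P *ᵥ v)
  rw [sub_dotProduct, dotProduct_sub, dotProduct_sub, hPv, dotProduct_comm (P *ᵥ v)] at hnonneg
  linarith

theorem dotProduct_transpose_mul_mul_mulVec {ι κ R : Type*} [Fintype ι] [Fintype κ]
    [CommSemiring R] (A : Matrix κ ι R) (H : Matrix κ κ R) (v : ι → R) :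
    v ⬝ᵥ (Aᵀ * H * A) *ᵥ v = A *ᵥ v ⬝ᵥ H *ᵥ A *ᵥ v := by
  rw [← mulVec_mulVec, ← mulVec_mulVec, dotProduct_mulVec, vecMul_transpose]

theorem isSymm_transpose_mul_mul {ι κ R : Type*} [Fintype κ] [CommSemiring R]
    {H : Matrix κ κ R} (hH : H.IsSymm) (A : Matrix κ ι R) : (Aᵀ * H * A).IsSymm := by
  rw [IsSymm, transpose_mul, transpose_mul, transpose_transpose, hH.eq, Matrix.mul_assoc]

theorem isSymm_mul_mul_transpose {κ τ R : Type*} [Fintype τ] [CommSemiring R]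
    {W : Matrix τ τ R} (hW : W.IsSymm) (S : Matrix κ τ R) : (S * W * Sᵀ).IsSymm := by
  simpa using isSymm_transpose_mul_mul hW Sᵀ

theorem mul_mul_transpose_mul_mul_self {ι κ τ R : Type*} [Fintype ι] [Fintype κ] [Fintype τ]
    [CommSemiring R] {W : Matrix τ τ R} {S : Matrix κ τ R} {A : Matrix κ ι R}
    (hWMW : W * (Sᵀ * A * Aᵀ * S) * W = W) :
    S * W * Sᵀ * (A * Aᵀ) * (S * W * Sᵀ) = S * W * Sᵀ := by
  calc S * W * Sᵀ * (A * Aᵀ) * (S * W * Sᵀ) = S * (W * (Sᵀ * A * Aᵀ * S) * W) * Sᵀ := by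
        simp only [Matrix.mul_assoc]
    _ = S * W * Sᵀ := by rw [hWMW]

theorem transpose_mul_mul_mul_self {ι κ R : Type*} [Fintype ι] [Fintype κ] [CommSemiring R]
    {H : Matrix κ κ R} {A : Matrix κ ι R} (hH : H * (A * Aᵀ) * H = H) :
    Aᵀ * H * A * (Aᵀ * H * A) = Aᵀ * H * A := by
  calc Aᵀ * H * A * (Aᵀ * H * A) = Aᵀ * (H * (A * Aᵀ) * H) * A := by simp only [Matrix.mul_assoc]
    _ = Aᵀ * H * A := by rw [hH]

theorem sub_dotProduct_mulVec_sub_le {ι κ : Type*} [Fintype ι] [Fintype κ] {H : Matrix κ κ ℝ}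
    (hsymm : H.IsSymm) {A : Matrix κ ι ℝ} (hH : H * (A * Aᵀ) * H = H) {b : κ → ℝ} {y : ι → ℝ}
    (hy : H *ᵥ (A *ᵥ y - b) = 0) (x : ι → ℝ) :
    (A *ᵥ x - b) ⬝ᵥ H *ᵥ (A *ᵥ x - b) ≤ (x - y) ⬝ᵥ (x - y) := by
  have hHr : H *ᵥ (A *ᵥ x - b) = H *ᵥ A *ᵥ (x - y) := by
    rw [← sub_eq_zero, ← mulVec_sub, mulVec_sub A x y, ← hy]
    congr 1
    abel
  calc (A *ᵥ x - b) ⬝ᵥ H *ᵥ (A *ᵥ x - b) = A *ᵥ (x - y) ⬝ᵥ H *ᵥ A *ᵥ (x - y) := by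
        rw [hHr, hsymm.dotProduct_mulVec_comm, hHr, dotProduct_comm]
    _ = (x - y) ⬝ᵥ (Aᵀ * H * A) *ᵥ (x - y) := (dotProduct_transpose_mul_mul_mulVec A H _).symm
    _ ≤ (x - y) ⬝ᵥ (x - y) :=
      dotProduct_mulVec_le_dotProduct_self_of_isSymm_of_idempotent
        (isSymm_transpose_mul_mul hsymm A) (transpose_mul_mul_mul_self hH) _

theorem sub_dotProduct_mulVec_sub_le_of_sketch {ι κ τ : Type*} [Fintype ι] [Fintype κ]
    [Fintype τ] {W : Matrix τ τ ℝ} (hW : W.IsSymm) {S : Matrix κ τ ℝ} {A : Matrix κ ι ℝ}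
    (hWMW : W * (Sᵀ * A * Aᵀ * S) * W = W) {b : κ → ℝ} {y : ι → ℝ}
    (hy : (Sᵀ * A) *ᵥ y = Sᵀ *ᵥ b) (x : ι → ℝ) :
    (A *ᵥ x - b) ⬝ᵥ (S * W * Sᵀ) *ᵥ (A *ᵥ x - b) ≤ (x - y) ⬝ᵥ (x - y) := by
  refine sub_dotProduct_mulVec_sub_le (isSymm_mul_mul_transpose hW S)
    (mul_mul_transpose_mul_mul_self hWMW) ?_ x
  have hsketch : Sᵀ *ᵥ (A *ᵥ y - b) = 0 := by rw [mulVec_sub, mulVec_mulVec, hy, sub_self]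
  rw [← mulVec_mulVec, hsketch, mulVec_zero]

end Matrix

theorem norm_toLp_two_sq {ι : Type*} [Fintype ι] (v : ι → ℝ) :
    ‖WithLp.toLp 2 v‖ ^ 2 = v ⬝ᵥ v := by
  rw [← real_inner_self_eq_norm_sq, EuclideanSpace.inner_toLp_toLp]
  simp

theorem specNorm_pos {m n : ℕ} {A : Matrix (Fin m) (Fin n) ℝ} (hA : A ≠ 0) : 0 < specNorm A := by
  simpa [specNorm] using hA

theorem mulVec_dotProduct_mulVec_le_specNorm_sq {m n : ℕ} (A : Matrix (Fin m) (Fin n) ℝ)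
    (v : Fin n → ℝ) : A *ᵥ v ⬝ᵥ A *ᵥ v ≤ specNorm A ^ 2 * (v ⬝ᵥ v) := by
  rw [← norm_toLp_two_sq, ← norm_toLp_two_sq, ← mul_pow]
  exact pow_le_pow_left₀ (norm_nonneg _)
    ((LinearMap.toContinuousLinearMap (toEuclideanLin A)).le_opNorm (WithLp.toLp 2 v)) 2

theorem mul_dotProduct_self_le_specNorm_sq_mul_of_isMax {m n : ℕ} {ι : Type*} [Fintype ι]
    [Nonempty ι] {A : Matrix (Fin m) (Fin n) ℝ} {H : ι → Matrix (Fin m) (Fin m) ℝ} {σ : ℝ}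
    (hσ : 0 ≤ σ)
    (hspec : ∀ v, A *ᵥ v ≠ 0 → σ * (v ⬝ᵥ v) ≤ fmax fun i => v ⬝ᵥ (Aᵀ * H i * A) *ᵥ v)
    {v : Fin n → ℝ} {j : ι} (hj : ∀ i, A *ᵥ v ⬝ᵥ H i *ᵥ A *ᵥ v ≤ A *ᵥ v ⬝ᵥ H j *ᵥ A *ᵥ v) :
    σ * (A *ᵥ v ⬝ᵥ A *ᵥ v) ≤ specNorm A ^ 2 * (A *ᵥ v ⬝ᵥ H j *ᵥ A *ᵥ v) := by
  rcases eq_or_ne (A *ᵥ v) 0 with hAv | hAv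
  · simp [hAv]
  have hmax : (fmax fun i => v ⬝ᵥ (Aᵀ * H i * A) *ᵥ v) ≤ A *ᵥ v ⬝ᵥ H j *ᵥ A *ᵥ v :=
    Finset.sup'_le _ _ fun i _ => (dotProduct_transpose_mul_mul_mulVec A (H i) v).trans_le (hj i)
  calc σ * (A *ᵥ v ⬝ᵥ A *ᵥ v) ≤ σ * (specNorm A ^ 2 * (v ⬝ᵥ v)) :=
        mul_le_mul_of_nonneg_left (mulVec_dotProduct_mulVec_le_specNorm_sq A v) hσ
    _ = specNorm A ^ 2 * (σ * (v ⬝ᵥ v)) := by ring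
    _ ≤ specNorm A ^ 2 * (A *ᵥ v ⬝ᵥ H j *ᵥ A *ᵥ v) :=
        mul_le_mul_of_nonneg_left ((hspec v hAv).trans hmax) (sq_nonneg _)

theorem StronglyConvexWith.half_mul_dotProduct_le_breg {n : ℕ} {μ : ℝ} {f : (Fin n → ℝ) → ℝ}
    (hf : StronglyConvexWith μ f) {x xs : Fin n → ℝ} (hxs : IsSubgrad f x xs) (y : Fin n → ℝ) :
    μ / 2 * ((y - x) ⬝ᵥ (y - x)) ≤ breg f xs x y := by
  have := hf x y xs hxs
  unfold breg
  linarith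

theorem stmt7_general {m n τ q : ℕ} [NeZero q] (A : Matrix (Fin m) (Fin n) ℝ) (hA : A ≠ 0)
    (b : Fin m → ℝ) (xbar : Fin n → ℝ) (hxbar : A.mulVec xbar = b)
    (S : Fin q → Matrix (Fin m) (Fin τ) ℝ) (W : Fin q → Matrix (Fin τ) (Fin τ) ℝ)
    (hWsym : ∀ i, (W i)ᵀ = W i)
    (hWMW : ∀ i, W i * ((S i)ᵀ * A * Aᵀ * S i) * W i = W i)
    (f : (Fin n → ℝ) → ℝ) (μ : ℝ) (hμ : 0 < μ) (hf : StronglyConvexWith μ f)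
    (x xs : Fin n → ℝ) (hxs : IsSubgrad f x xs)
    (σinf : ℝ) (hσinf : 0 < σinf)
    (hspec : ∀ v : Fin n → ℝ, A.mulVec v ≠ 0 →
      σinf * (v ⬝ᵥ v) ≤ fmax (fun i => v ⬝ᵥ (Aᵀ * (S i * W i * (S i)ᵀ) * A).mulVec v))
    (γ : ℝ)
    (herr : γ * breg f xs x xbar ≤ (A.mulVec x - b) ⬝ᵥ (A.mulVec x - b))
    (istar : Fin q)
    (hstar : ∀ i, (A.mulVec x - b) ⬝ᵥ (S i * W i * (S i)ᵀ).mulVec (A.mulVec x - b) ≤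
      (A.mulVec x - b) ⬝ᵥ (S istar * W istar * (S istar)ᵀ).mulVec (A.mulVec x - b))
    (xhat xhs : Fin n → ℝ)
    (hxhatL : ((S istar)ᵀ * A).mulVec xhat = (S istar)ᵀ.mulVec b)
    (hadm : ∀ y : Fin n → ℝ, ((S istar)ᵀ * A).mulVec y = (S istar)ᵀ.mulVec b →
      breg f xhs xhat y ≤ breg f xs x y - breg f xs x xhat) :
    breg f xhs xhat xbar ≤
      (1 - μ * γ * σinf / (2 * (specNorm A) ^ 2)) * breg f xs x xbar := by
  set r := A *ᵥ x - b
  set H := S istar * W istar * (S istar)ᵀ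
  set N := specNorm A ^ 2
  have hAr : A *ᵥ (x - xbar) = r := by rw [mulVec_sub, hxbar]
  have hmax : σinf * (r ⬝ᵥ r) ≤ N * (r ⬝ᵥ H *ᵥ r) := by
    rw [← hAr] at hstar ⊢
    exact mul_dotProduct_self_le_specNorm_sq_mul_of_isMax hσinf.le hspec hstar
  have hHr : r ⬝ᵥ H *ᵥ r ≤ (x - xhat) ⬝ᵥ (x - xhat) :=
    sub_dotProduct_mulVec_sub_le_of_sketch (hWsym istar) (hWMW istar) hxhatL x
  have hsc := hf.half_mul_dotProduct_le_breg hxs xhat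
  rw [← neg_sub x xhat, neg_dotProduct_neg] at hsc
  have hN : 0 < 2 * N := by have := specNorm_pos hA; positivity
  have hkey : μ * γ * σinf * breg f xs x xbar ≤ 2 * N * breg f xs x xhat := by
    calc μ * γ * σinf * breg f xs x xbar = μ * σinf * (γ * breg f xs x xbar) := by ring
      _ ≤ μ * (σinf * (r ⬝ᵥ r)) := by
        rw [mul_assoc]
        exact mul_le_mul_of_nonneg_left (mul_le_mul_of_nonneg_left herr hσinf.le) hμ.le
      _ ≤ μ * (N * ((x - xhat) ⬝ᵥ (x - xhat))) :=
        mul_le_mul_of_nonneg_left (hmax.trans (by gcongr)) hμ.le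
      _ = 2 * N * (μ / 2 * ((x - xhat) ⬝ᵥ (x - xhat))) := by ring
      _ ≤ 2 * N * breg f xs x xhat := mul_le_mul_of_nonneg_left hsc hN.le
  have hdecrease : μ * γ * σinf / (2 * N) * breg f xs x xbar ≤ breg f xs x xhat := by
    rw [div_mul_eq_mul_div, div_le_iff₀ hN]
    linarith
  have hproj := hadm xbar (by rw [← mulVec_mulVec, hxbar])
  linarith

/-- one-step linear contraction of the max-distance sketched Bregman
projection method: D_f^{x̂_*}(x̂, x̄) ≤ (1 − μγσ_∞/(2‖A‖²))·D_f^{x_*}(x, x̄). -/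
theorem stmt7 {m n τ q : ℕ} [NeZero q] (A : Matrix (Fin m) (Fin n) ℝ) (hA : A ≠ 0)
    (b : Fin m → ℝ) (xbar : Fin n → ℝ) (hxbar : A.mulVec xbar = b)
    (S : Fin q → Matrix (Fin m) (Fin τ) ℝ) (W : Fin q → Matrix (Fin τ) (Fin τ) ℝ)
    (hWsym : ∀ i, (W i)ᵀ = W i)
    (hMWM : ∀ i, ((S i)ᵀ * A * Aᵀ * S i) * W i * ((S i)ᵀ * A * Aᵀ * S i)
      = (S i)ᵀ * A * Aᵀ * S i)
    (hWMW : ∀ i, W i * ((S i)ᵀ * A * Aᵀ * S i) * W i = W i)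
    (hMW : ∀ i, (((S i)ᵀ * A * Aᵀ * S i) * W i)ᵀ = ((S i)ᵀ * A * Aᵀ * S i) * W i)
    (hWM : ∀ i, (W i * ((S i)ᵀ * A * Aᵀ * S i))ᵀ = W i * ((S i)ᵀ * A * Aᵀ * S i))
    (f : (Fin n → ℝ) → ℝ) (μ : ℝ) (hμ : 0 < μ) (hf : StronglyConvexWith μ f)
    (x xs : Fin n → ℝ) (hxs : IsSubgrad f x xs)
    (σinf : ℝ) (hσinf : 0 < σinf)
    (hspec : ∀ v : Fin n → ℝ, A.mulVec v ≠ 0 →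
      σinf * (v ⬝ᵥ v) ≤ fmax (fun i => v ⬝ᵥ (Aᵀ * (S i * W i * (S i)ᵀ) * A).mulVec v))
    (γ : ℝ) (hγ : 0 < γ)
    (herr : γ * breg f xs x xbar ≤ (A.mulVec x - b) ⬝ᵥ (A.mulVec x - b))
    (istar : Fin q)
    (hstar : ∀ i, (A.mulVec x - b) ⬝ᵥ (S i * W i * (S i)ᵀ).mulVec (A.mulVec x - b) ≤
      (A.mulVec x - b) ⬝ᵥ (S istar * W istar * (S istar)ᵀ).mulVec (A.mulVec x - b))
    (xhat xhs : Fin n → ℝ)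
    (hxhatL : ((S istar)ᵀ * A).mulVec xhat = (S istar)ᵀ.mulVec b)
    (hxhs : IsSubgrad f xhat xhs)
    (hadm : ∀ y : Fin n → ℝ, ((S istar)ᵀ * A).mulVec y = (S istar)ᵀ.mulVec b →
      breg f xhs xhat y ≤ breg f xs x y - breg f xs x xhat) :
    breg f xhs xhat xbar ≤
      (1 - μ * γ * σinf / (2 * (specNorm A) ^ 2)) * breg f xs x xbar :=
  stmt7_general A hA b xbar hxbar S W hWsym hWMW f μ hμ hf x xs hxs σinf hσinf hspec γ herr istar
    hstar xhat xhs hxhatL hadm
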